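/- arXiv:1210.1263 — 3 statements merged into one kernel-verified Lean document; each statement's English description precedes it below -/
import Mathlib

section
/- For every positive integer n, ⌊10^(pos n) · C₁₀⌋ = ∑_{k=1}^{n} k · 10^(pos n − pos k); that is, the first pos n decimal digits of Champernowne's constant are exactly the concatenation of the base-ten representations of the integers 1, 2, …, n. -/
/-- `pos n` is the position in the decimal expansion of Champernowne's constant
of the last digit of the integer `n`. -/
def pos (n : ℕ) : ℕ := ∑ k ∈ Finset.Icc 1 n, (Nat.digits 10 k).length

/-- Champernowne's constant in base ten. -/
noncomputable def C₁₀ : ℝ := ∑' n : ℕ, ((n + 1 : ℕ) : ℝ) / 10 ^ pos (n + 1)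

/-!
Multiplying by `10 ^ pos n` splits the series into the integer `∑ k ≤ n, k * 10 ^ (pos n - pos k)`
and the tail `∑ k > n, k / 10 ^ (pos k - pos n)`. Since `k ≤ 10 ^ len k - 1` and
`pos k = pos (k - 1) + len k`, each tail term is at most
`10 ^ (pos n - pos (k - 1)) - 10 ^ (pos n - pos k)`, so the tail telescopes to at most `1`.
The bound is strict because `n + 1` and `n + 2` cannot both be of the form `10 ^ d - 1`.
-/

open Filter Topology

section Telescoping

variable {f r : ℕ → ℝ} {l : ℝ}

theorem hasSum_sub_succ_of_antitone (hanti : Antitone r) (hr : Tendsto r atTop (𝓝 l)) :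
    HasSum (fun i ↦ r i - r (i + 1)) (r 0 - l) := by
  refine (hasSum_iff_tendsto_nat_of_nonneg (fun i ↦ sub_nonneg.2 (hanti i.le_succ)) _).2 ?_
  simpa only [Finset.sum_range_sub'] using hr.const_sub (r 0)

theorem hasSum_sub_succ_of_le_sub_succ (hf : ∀ i, 0 ≤ f i) (hfr : ∀ i, f i ≤ r i - r (i + 1))
    (hr : Tendsto r atTop (𝓝 l)) : HasSum (fun i ↦ r i - r (i + 1)) (r 0 - l) :=
  hasSum_sub_succ_of_antitone
    (antitone_nat_of_succ_le fun i ↦ sub_nonneg.1 ((hf i).trans (hfr i))) hr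

theorem summable_of_le_sub_succ (hf : ∀ i, 0 ≤ f i) (hfr : ∀ i, f i ≤ r i - r (i + 1))
    (hr : Tendsto r atTop (𝓝 l)) : Summable f :=
  .of_nonneg_of_le hf hfr (hasSum_sub_succ_of_le_sub_succ hf hfr hr).summable

theorem tsum_lt_of_le_sub_succ (hf : ∀ i, 0 ≤ f i) (hfr : ∀ i, f i ≤ r i - r (i + 1))
    (hr : Tendsto r atTop (𝓝 l)) {j : ℕ} (hj : f j < r j - r (j + 1)) :
    ∑' i, f i < r 0 - l := by
  have hsum := hasSum_sub_succ_of_le_sub_succ hf hfr hr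
  exact hsum.tsum_eq ▸ Summable.tsum_lt_tsum_of_nonneg hf hfr hj hsum.summable

end Telescoping

theorem Nat.add_two_lt_pow_length_digits_or (b k : ℕ) (hb : 2 < b) :
    k + 2 < b ^ (b.digits (k + 1)).length ∨ k + 3 < b ^ (b.digits (k + 2)).length := by
  refine or_iff_not_imp_left.2 fun h ↦ ?_
  have hk : k + 2 = b ^ (b.digits (k + 1)).length :=
    le_antisymm (Nat.lt_base_pow_length_digits (by omega)) (not_lt.1 h)
  have hlen : (b.digits (k + 1)).length + 1 ≤ (b.digits (k + 2)).length :=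
    (Nat.lt_digits_length_iff (by omega) _).2 hk.ge
  calc k + 3 < b * (k + 2) := by nlinarith
    _ = b ^ ((b.digits (k + 1)).length + 1) := by rw [hk, pow_succ']
    _ ≤ b ^ (b.digits (k + 2)).length := Nat.pow_le_pow_right (by omega) hlen

namespace Champernowne

theorem pos_succ (k : ℕ) : pos (k + 1) = pos k + (Nat.digits 10 (k + 1)).length :=
  Finset.sum_Icc_succ_top (Nat.le_add_left 1 k) _

theorem pos_strictMono : StrictMono pos :=
  strictMono_nat_of_lt_succ fun k ↦ by
    have := (Nat.lt_digits_length_iff (b := 10) (k := 0) (by norm_num) (k + 1)).2 (by simp)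
    rw [pos_succ]
    omega

noncomputable def term (k : ℕ) : ℝ := k / 10 ^ pos k

theorem term_nonneg (k : ℕ) : 0 ≤ term k := by unfold term; positivity

theorem C₁₀_eq_tsum_term : C₁₀ = ∑' i, term (i + 1) := rfl

theorem inv_pow_pos_sub_inv_pow_pos_succ (k : ℕ) :
    ((10 : ℝ) ^ pos k)⁻¹ - ((10 : ℝ) ^ pos (k + 1))⁻¹ =
      ((10 : ℝ) ^ (Nat.digits 10 (k + 1)).length - 1) / 10 ^ pos (k + 1) := by
  rw [pos_succ, pow_add]
  field_simp

theorem term_succ_le (k : ℕ) :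
    term (k + 1) ≤ ((10 : ℝ) ^ pos k)⁻¹ - ((10 : ℝ) ^ pos (k + 1))⁻¹ := by
  have h : k + 1 + 1 ≤ 10 ^ (Nat.digits 10 (k + 1)).length :=
    Nat.lt_base_pow_length_digits (by norm_num)
  rw [inv_pow_pos_sub_inv_pow_pos_succ, term]
  gcongr
  rw [le_sub_iff_add_le]
  exact_mod_cast h

theorem term_succ_lt (k : ℕ) (h : k + 2 < 10 ^ (Nat.digits 10 (k + 1)).length) :
    term (k + 1) < ((10 : ℝ) ^ pos k)⁻¹ - ((10 : ℝ) ^ pos (k + 1))⁻¹ := by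
  rw [inv_pow_pos_sub_inv_pow_pos_succ, term]
  gcongr
  rw [lt_sub_iff_add_lt]
  exact_mod_cast h

theorem tendsto_inv_pow_pos : Tendsto (fun k ↦ ((10 : ℝ) ^ pos k)⁻¹) atTop (𝓝 0) := by
  simp_rw [← inv_pow]
  exact (tendsto_pow_atTop_nhds_zero_of_lt_one (by norm_num) (by norm_num)).comp
    pos_strictMono.tendsto_atTop

theorem summable_term_succ : Summable fun i ↦ term (i + 1) :=
  summable_of_le_sub_succ (fun i ↦ term_nonneg (i + 1)) term_succ_le tendsto_inv_pow_pos

theorem tsum_term_tail_lt (n : ℕ) : ∑' i, term (i + n + 1) < ((10 : ℝ) ^ pos n)⁻¹ := by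
  have hfr (i : ℕ) : term (i + n + 1) ≤
      ((10 : ℝ) ^ pos (i + n))⁻¹ - ((10 : ℝ) ^ pos (i + 1 + n))⁻¹ := by
    rw [add_right_comm i 1 n]
    exact term_succ_le (i + n)
  have hr := tendsto_inv_pow_pos.comp (tendsto_add_atTop_nat n)
  obtain h | h := Nat.add_two_lt_pow_length_digits_or 10 n (by norm_num)
  · simpa using tsum_lt_of_le_sub_succ (j := 0) (fun i ↦ term_nonneg (i + n + 1)) hfr hr
      (by simpa [add_comm 1 n] using term_succ_lt n h)
  · simpa using tsum_lt_of_le_sub_succ (j := 1) (fun i ↦ term_nonneg (i + n + 1)) hfr hr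
      (by simpa [add_comm 1 n, add_comm 2 n] using term_succ_lt (n + 1) h)

theorem pow_pos_mul_sum_term (n : ℕ) :
    (10 : ℝ) ^ pos n * ∑ i ∈ Finset.range n, term (i + 1) =
      ((∑ k ∈ Finset.Icc 1 n, (k : ℤ) * 10 ^ (pos n - pos k) : ℤ) : ℝ) := by
  rw [Finset.mul_sum, Finset.range_eq_Ico,
    Finset.sum_Ico_add' (fun k ↦ (10 : ℝ) ^ pos n * term k), zero_add,
    Finset.Ico_add_one_right_eq_Icc]
  push_cast
  refine Finset.sum_congr rfl fun k hk ↦ ?_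
  have hle : pos k ≤ pos n := pos_strictMono.monotone (Finset.mem_Icc.1 hk).2
  have hsplit : (10 : ℝ) ^ pos n = 10 ^ (pos n - pos k) * 10 ^ pos k := by
    rw [← pow_add, Nat.sub_add_cancel hle]
  rw [term, hsplit]
  field_simp

end Champernowne

open Champernowne in
theorem floor_champernowne_concat_general (n : ℕ) :
    ⌊(10 : ℝ) ^ pos n * C₁₀⌋ = ∑ k ∈ Finset.Icc 1 n, (k : ℤ) * 10 ^ (pos n - pos k) := by
  rw [C₁₀_eq_tsum_term, ← summable_term_succ.sum_add_tsum_nat_add n, mul_add,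
    pow_pos_mul_sum_term, Int.floor_intCast_add, add_eq_left, Int.floor_eq_zero_iff]
  have hpow : (0 : ℝ) < 10 ^ pos n := by positivity
  exact ⟨mul_nonneg hpow.le (tsum_nonneg fun i ↦ term_nonneg _),
    (lt_inv_mul_iff₀ hpow).1 (by simpa using tsum_term_tail_lt n)⟩

theorem floor_champernowne_concat (n : ℕ) (hn : 0 < n) :
    ⌊(10 : ℝ) ^ pos n * C₁₀⌋ = ∑ k ∈ Finset.Icc 1 n, (k : ℤ) * 10 ^ (pos n - pos k) :=
  floor_champernowne_concat_general n
end

section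
/- The continued fraction expansion of Champernowne's constant C₁₀ begins [0; 8, 9, 1, 149083, 1, 1, 1, 4, 1, 1, 1, 3, 4, 1, 1, 1, 15, …]; precisely, the integer part of C₁₀ is 0 and for each i < 17 the i-th partial denominator of GenContFract.of C₁₀ equals the i-th entry of the list [8, 9, 1, 149083, 1, 1, 1, 4, 1, 1, 1, 3, 4, 1, 1, 1, 15]. -/
open Finset

lemma pos_succ (n : ℕ) : pos (n + 1) = pos n + (Nat.digits 10 (n + 1)).length := by
  rw [pos, pos, sum_Icc_succ_top (by omega)]

lemma pos_add (m n : ℕ) :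
    pos (m + n) = pos m + ∑ j ∈ range n, (Nat.digits 10 (m + j + 1)).length := by
  induction n with
  | zero => simp
  | succ n ih => rw [← add_assoc, pos_succ, ih, sum_range_succ, add_assoc]

lemma length_digits_eq_of_le_of_lt {b d k : ℕ} (hb : 1 < b) (hk : b ^ d ≤ k)
    (hk' : k < b ^ (d + 1)) : (b.digits k).length = d + 1 :=
  le_antisymm ((Nat.digits_length_le_iff hb k).2 hk') ((Nat.lt_digits_length_iff hb k).2 hk)

lemma pos_add_of_pow_le_of_lt {d m n : ℕ} (hm : 10 ^ d ≤ m + 1) (hmn : m + n < 10 ^ (d + 1)) :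
    pos (m + n) = pos m + n * (d + 1) := by
  rw [pos_add, sum_congr rfl fun j hj => length_digits_eq_of_le_of_lt (b := 10) (d := d)
    (by norm_num) (by omega) (by simp only [mem_range] at hj; omega)]
  rw [sum_const, card_range, smul_eq_mul]

lemma add_mul_le_pos_add_of_pow_le {d m : ℕ} (hm : 10 ^ d ≤ m + 1) (n : ℕ) :
    pos m + n * (d + 1) ≤ pos (m + n) := by
  rw [pos_add]
  gcongr
  calc n * (d + 1) = ∑ _j ∈ range n, (d + 1) := by simp
    _ ≤ _ := sum_le_sum fun j _ => ?_
  exact (Nat.lt_digits_length_iff (b := 10) (by norm_num) _).2 (by omega)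

lemma pos_nine : pos 9 = 9 := by
  simpa [show pos 0 = 0 from rfl] using
    pos_add_of_pow_le_of_lt (d := 0) (m := 0) (n := 9) (by norm_num) (by norm_num)

lemma pos_ninety_nine : pos 99 = 189 := by
  simpa [pos_nine] using
    pos_add_of_pow_le_of_lt (d := 1) (m := 9) (n := 90) (by norm_num) (by norm_num)

lemma pos_one_hundred_ten : pos 110 = 222 := by
  simpa [pos_ninety_nine] using
    pos_add_of_pow_le_of_lt (d := 2) (m := 99) (n := 11) (by norm_num) (by norm_num)

lemma sum_range_div_pow_pos {d m n : ℕ} (hm : 10 ^ d ≤ m + 1) (hmn : m + n < 10 ^ (d + 1)) :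
    ∑ j ∈ range n, ((m + j + 1 : ℕ) : ℝ) / 10 ^ pos (m + j + 1) =
      ∑ j ∈ range n, ((m + j + 1 : ℕ) : ℝ) / 10 ^ (pos m + (j + 1) * (d + 1)) := by
  refine sum_congr rfl fun j hj => ?_
  rw [add_assoc m, pos_add_of_pow_le_of_lt hm (by simp only [mem_range] at hj; omega)]

def champernowneHead : ℚ :=
  123456789101112131415161718192021222324252627282930313233343536373839404142434445464748495051525354555657585960616263646566676869707172737475767778798081828384858687888990919293949596979899100101102103104105106107108109110 / 10 ^ 222

lemma sum_range_champernowne :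
    ∑ n ∈ range 110, ((n + 1 : ℕ) : ℝ) / 10 ^ pos (n + 1) = champernowneHead := by
  have h₁ := sum_range_div_pow_pos (d := 0) (m := 0) (n := 9) (by norm_num) (by norm_num)
  have h₂ := sum_range_div_pow_pos (d := 1) (m := 9) (n := 90) (by norm_num) (by norm_num)
  have h₃ := sum_range_div_pow_pos (d := 2) (m := 99) (n := 11) (by norm_num) (by norm_num)
  simp only [zero_add, show pos 0 = 0 from rfl] at h₁
  rw [show 110 = 9 + 90 + 11 from rfl, sum_range_add, sum_range_add, h₁, h₂, h₃]
  norm_num [sum_range_succ, pos_nine, pos_ninety_nine, champernowneHead]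

lemma le_pos_tail (j : ℕ) : 225 + 3 * j ≤ pos (j + 110 + 1) := by
  have h := add_mul_le_pos_add_of_pow_le (d := 2) (m := 110) (by norm_num) (j + 1)
  rw [pos_one_hundred_ten] at h
  rw [show j + 110 + 1 = 110 + (j + 1) by ring]
  omega

lemma champernowne_tail_term_le (j : ℕ) :
    ((j + 110 + 1 : ℕ) : ℝ) / 10 ^ pos (j + 110 + 1) ≤
      (111 * (1 / 1000 : ℝ) ^ j + j * (1 / 1000) ^ j) / 10 ^ 225 := by
  calc ((j + 110 + 1 : ℕ) : ℝ) / 10 ^ pos (j + 110 + 1)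
      ≤ ((j + 110 + 1 : ℕ) : ℝ) / 10 ^ (225 + 3 * j) := by
        gcongr
        · norm_num
        · exact le_pos_tail j
    _ = (111 * (1 / 1000 : ℝ) ^ j + j * (1 / 1000) ^ j) / 10 ^ 225 := by
        rw [pow_add, pow_mul, one_div, inv_pow]
        field_simp
        push_cast
        ring

lemma hasSum_champernowne_tail_bound :
    HasSum (fun j : ℕ => (111 * (1 / 1000 : ℝ) ^ j + j * (1 / 1000) ^ j) / 10 ^ 225)
      ((111 * (1 - 1 / 1000)⁻¹ + 1 / 1000 / (1 - 1 / 1000) ^ 2) / 10 ^ 225) := by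
  refine (((hasSum_geometric_of_lt_one ?_ ?_).mul_left 111).add
    (hasSum_coe_mul_geometric_of_norm_lt_one ?_)).div_const _ <;> norm_num

lemma champernowne_mem_Icc :
    C₁₀ ∈ Set.Icc (champernowneHead : ℝ)
      ((champernowneHead + 112 / 10 ^ 225 : ℚ) : ℝ) := by
  set f : ℕ → ℝ := fun n => ((n + 1 : ℕ) : ℝ) / 10 ^ pos (n + 1)
  have hf_nonneg (n : ℕ) : 0 ≤ f n := by positivity
  have hbound := hasSum_champernowne_tail_bound
  have htail : Summable fun j => f (j + 110) :=
    .of_nonneg_of_le (fun j => hf_nonneg _) champernowne_tail_term_le hbound.summable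
  have hsplit : C₁₀ = ∑ n ∈ range 110, f n + ∑' j, f (j + 110) :=
    (((summable_nat_add_iff 110).1 htail).sum_add_tsum_nat_add 110).symm
  have htail_le : ∑' j, f (j + 110) ≤ 112 / 10 ^ 225 :=
    (hasSum_le champernowne_tail_term_le htail.hasSum hbound).trans (by norm_num)
  rw [hsplit, sum_range_champernowne]
  push_cast
  exact ⟨le_add_of_nonneg_right (tsum_nonneg fun j => hf_nonneg _), by linarith⟩

def CFPrefixCert : List ℤ → ℚ → ℚ → Prop
  | [], _, _ => True
  | a :: as, l, u => (a : ℚ) < l ∧ u < a + 1 ∧ CFPrefixCert as (u - a)⁻¹ (l - a)⁻¹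

lemma floor_eq_of_cfPrefixCert {a : ℤ} {as : List ℤ} {l u : ℚ} {x : ℝ}
    (h : CFPrefixCert (a :: as) l u) (hl : l ≤ x) (hu : x ≤ u) : ⌊x⌋ = a := by
  obtain ⟨ha, hu', -⟩ := h
  have ha' : (a : ℝ) < l := by exact_mod_cast ha
  have hu'' : (u : ℝ) < a + 1 := by exact_mod_cast hu'
  exact Int.floor_eq_iff.2 ⟨by linarith, by linarith⟩

lemma partDens_of_cfPrefixCert {a : ℤ} {as : List ℤ} {l u : ℚ} {x : ℝ}
    (h : CFPrefixCert (a :: as) l u) (hl : l ≤ x) (hu : x ≤ u) :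
    ∀ i < as.length, (GenContFract.of x).partDens.get? i = some ((as.map (↑)).getD i 0) := by
  induction as generalizing a l u x with
  | nil => simp
  | cons b bs ih =>
    have hfract : Int.fract x = x - a := by rw [Int.fract, floor_eq_of_cfPrefixCert h hl hu]
    obtain ⟨ha, hu', hcert⟩ := h
    have ha' : (a : ℝ) < l := by exact_mod_cast ha
    have hpos : 0 < Int.fract x := by linarith
    have hl' : (((u - a)⁻¹ : ℚ) : ℝ) ≤ (Int.fract x)⁻¹ := by
      push_cast; exact inv_anti₀ hpos (by linarith)
    have hu' : (Int.fract x)⁻¹ ≤ (((l - a)⁻¹ : ℚ) : ℝ) := by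
      push_cast; exact inv_anti₀ (by linarith) (by linarith)
    intro i hi
    cases i with
    | zero =>
      rw [GenContFract.partDens, Stream'.Seq.map_get?, ← Stream'.Seq.head,
        GenContFract.of_s_head hpos.ne']
      simp [floor_eq_of_cfPrefixCert hcert hl' hu']
    | succ i =>
      rw [GenContFract.partDens, Stream'.Seq.map_get?, GenContFract.of_s_succ,
        ← Stream'.Seq.map_get?, ← GenContFract.partDens, ih hcert hl' hu' i (by simpa using hi)]
      simp

theorem champernowne_cfe_first_coeffs :
    ⌊C₁₀⌋ = 0 ∧ ∀ i : ℕ, i < 17 →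
      (GenContFract.of C₁₀).partDens.get? i =
        some (([8, 9, 1, 149083, 1, 1, 1, 4, 1, 1, 1, 3, 4, 1, 1, 1, 15] : List ℝ).getD i 0) := by
  obtain ⟨hl, hu⟩ := champernowne_mem_Icc
  have hcert : CFPrefixCert [0, 8, 9, 1, 149083, 1, 1, 1, 4, 1, 1, 1, 3, 4, 1, 1, 1, 15]
      champernowneHead (champernowneHead + 112 / 10 ^ 225) := by
    norm_num [CFPrefixCert, champernowneHead]
  refine ⟨floor_eq_of_cfPrefixCert hcert hl hu, fun i hi => ?_⟩
  rw [partDens_of_cfPrefixCert hcert hl hu i hi]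
  norm_num
end

section
/- The convergent 60499999499/490050000000 of C₁₀ calculates exactly 187 correct digits of C₁₀ (counting the leading 0): ⌊10^186 · (60499999499/490050000000)⌋ = ⌊10^186 · C₁₀⌋, while ⌊10^187 · (60499999499/490050000000)⌋ = ⌊10^187 · C₁₀⌋ + 1; that is, the digits agree through decimal position 186 and the digit at position 187 (the 8 of the integer 98, immediately preceding the integer 10^2 in the concatenation) is computed as a 9 instead of an 8. -/
/-!
Cutting the series after the integer `99` leaves the rational `0.123…9899` with denominator
`10 ^ 189`. Since every integer has at least one digit and `k + j ≤ k * 2 ^ j`, the later terms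
decay at least like `5⁻ʲ`, so the tail is at most `5/4 * 100 / 10 ^ 192 < 2 / 10 ^ 190`. That is
too small to move the digits at positions `186` and `187`, and both sides reduce to floors of
explicit rationals.
-/

open Finset

lemma pos_add_le_pos_add (m j : ℕ) : pos m + j ≤ pos (m + j) := by
  induction j with
  | zero => rfl
  | succ j ih =>
    have hlen : 0 < (Nat.digits 10 (m + j + 1)).length :=
      List.length_pos_iff.2 (Nat.digits_ne_nil_iff_ne_zero.2 (Nat.succ_ne_zero _))
    rw [← Nat.add_assoc m j 1, pos_succ]
    omega

lemma pos_one_hundred : pos 100 = 192 := by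
  rw [pos_succ, pos_ninety_nine]
  norm_num

/-- The integer `123456789101112…n` obtained by concatenating the decimal expansions of `1, …, n`. -/
def champernowneNat : ℕ → ℕ
  | 0 => 0
  | n + 1 => champernowneNat n * 10 ^ (Nat.digits 10 (n + 1)).length + (n + 1)

set_option maxRecDepth 10000 in
lemma champernowneNat_ninety_nine : champernowneNat 99 =
    123456789101112131415161718192021222324252627282930313233343536373839404142434445464748495051525354555657585960616263646566676869707172737475767778798081828384858687888990919293949596979899 := by
  norm_num [champernowneNat]

noncomputable def champernowneTerm (k : ℕ) : ℝ := (k : ℝ) / 10 ^ pos k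

lemma C₁₀_eq_tsum : C₁₀ = ∑' n : ℕ, champernowneTerm (n + 1) := rfl

lemma champernowneTerm_nonneg (k : ℕ) : 0 ≤ champernowneTerm k := by
  unfold champernowneTerm; positivity

lemma sum_range_champernowneTerm (n : ℕ) :
    ∑ i ∈ range n, champernowneTerm (i + 1) = champernowneNat n / 10 ^ pos n := by
  induction n with
  | zero => simp [champernowneNat]
  | succ n ih =>
    rw [sum_range_succ, ih, champernowneTerm, pos_succ, champernowneNat]
    push_cast
    field_simp
    ring

lemma champernowneTerm_add_le {k : ℕ} (hk : 0 < k) (j : ℕ) :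
    champernowneTerm (j + k) ≤ champernowneTerm k * (1 / 5) ^ j := by
  have hnum : ((j + k : ℕ) : ℝ) ≤ k * 2 ^ j := by
    have : j + k ≤ k * 2 ^ j := by nlinarith [j.lt_two_pow_self]
    exact_mod_cast this
  have hpos : pos k + j ≤ pos (j + k) := by
    simpa only [add_comm j k] using pos_add_le_pos_add k j
  calc champernowneTerm (j + k) ≤ k * 2 ^ j / 10 ^ (pos k + j) := by
        unfold champernowneTerm
        gcongr
        norm_num
    _ = champernowneTerm k * (1 / 5) ^ j := by
        rw [champernowneTerm, pow_add, div_pow, one_pow,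
          show (10 : ℝ) ^ j = 2 ^ j * 5 ^ j by rw [← mul_pow]; norm_num]
        field_simp

lemma summable_champernowneTerm_add {k : ℕ} (hk : 0 < k) :
    Summable fun j ↦ champernowneTerm (j + k) :=
  .of_nonneg_of_le (fun _ ↦ champernowneTerm_nonneg _) (champernowneTerm_add_le hk)
    ((summable_geometric_of_lt_one (by norm_num) (by norm_num)).mul_left _)

lemma tsum_champernowneTerm_add_le {k : ℕ} (hk : 0 < k) :
    ∑' j, champernowneTerm (j + k) ≤ 5 / 4 * champernowneTerm k :=
  calc ∑' j, champernowneTerm (j + k) ≤ ∑' j : ℕ, champernowneTerm k * (1 / 5) ^ j :=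
        (summable_champernowneTerm_add hk).tsum_le_tsum (champernowneTerm_add_le hk)
          ((summable_geometric_of_lt_one (by norm_num) (by norm_num)).mul_left _)
    _ = 5 / 4 * champernowneTerm k := by
        rw [tsum_mul_left, tsum_geometric_of_lt_one (by norm_num) (by norm_num)]
        ring

lemma C₁₀_eq_add_tsum : C₁₀ = champernowneNat 99 / 10 ^ 189 + ∑' j, champernowneTerm (j + 100) := by
  rw [C₁₀_eq_tsum, ← (summable_champernowneTerm_add one_pos).sum_add_tsum_nat_add 99,
    sum_range_champernowneTerm, pos_ninety_nine]
  rfl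

lemma C₁₀_mem_Icc : C₁₀ ∈ Set.Icc ((champernowneNat 99 : ℝ) / 10 ^ 189)
    ((champernowneNat 99 : ℝ) / 10 ^ 189 + 2 / 10 ^ 190) := by
  have htail := tsum_champernowneTerm_add_le (k := 100) (by norm_num)
  rw [champernowneTerm, pos_one_hundred] at htail
  norm_num at htail
  rw [C₁₀_eq_add_tsum]
  constructor
  · exact le_add_of_nonneg_right (tsum_nonneg fun _ ↦ champernowneTerm_nonneg _)
  · linarith

lemma Int.floor_eq_of_le_of_le {α : Type*} [Ring α] [LinearOrder α] [IsStrictOrderedRing α]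
    [FloorRing α] {x y z : α} (hxy : x ≤ y) (hyz : y ≤ z) (h : ⌊z⌋ = ⌊x⌋) : ⌊y⌋ = ⌊x⌋ :=
  le_antisymm (h ▸ Int.floor_mono hyz) (Int.floor_mono hxy)

lemma floor_pow_mul_C₁₀ {k : ℕ}
    (h : ⌊(10 : ℝ) ^ k * (champernowneNat 99 / 10 ^ 189 + 2 / 10 ^ 190)⌋ =
      ⌊(10 : ℝ) ^ k * (champernowneNat 99 / 10 ^ 189)⌋) :
    ⌊(10 : ℝ) ^ k * C₁₀⌋ = ⌊(10 : ℝ) ^ k * (champernowneNat 99 / 10 ^ 189)⌋ :=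
  Int.floor_eq_of_le_of_le (by gcongr; exact C₁₀_mem_Icc.1) (by gcongr; exact C₁₀_mem_Icc.2) h

theorem hwm5_convergent_correct_digits :
    ⌊(10 : ℝ) ^ (186 : ℕ) * (60499999499 / 490050000000)⌋ = ⌊(10 : ℝ) ^ (186 : ℕ) * C₁₀⌋ ∧
    ⌊(10 : ℝ) ^ (187 : ℕ) * (60499999499 / 490050000000)⌋ = ⌊(10 : ℝ) ^ (187 : ℕ) * C₁₀⌋ + 1 := by
  constructor <;>
  · rw [floor_pow_mul_C₁₀ (by norm_num [champernowneNat_ninety_nine])]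
    norm_num [champernowneNat_ninety_nine]
end
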